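/- Suppose S₂, S₃ and S₄ are non-empty and S₁ = ∅. Then the multistability criterion holds if and only if Σ_{i∈S₂} a_i > min_{i∈S₃} a_i. (This is Theorem 3.1(b)(2).) -/

import Mathlib

open Finset

/-- The function `g` from the paper (eq. (3.4)/(4.4)), written with explicit sign classes. -/
noncomputable def gFun {s : ℕ} (S1 S2 S3 S4 : Finset (Fin s)) (a d : Fin s → ℝ) (z : ℝ) : ℝ :=
  ∑ i ∈ S1, a i * Real.log (z + d i) - ∑ i ∈ S2, a i * Real.log (d i - z)
    + ∑ i ∈ S3, a i * Real.log (d i - z) - ∑ i ∈ S4, a i * Real.log (z + d i)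

/-- The derivative `g'` of `g` (eq. (4.10)). -/
noncomputable def gDeriv {s : ℕ} (S1 S2 S3 S4 : Finset (Fin s)) (a d : Fin s → ℝ) (z : ℝ) : ℝ :=
  ∑ i ∈ S1, a i / (z + d i) + ∑ i ∈ S2, a i / (d i - z)
    - ∑ i ∈ S3, a i / (d i - z) - ∑ i ∈ S4, a i / (z + d i)

/-- Membership in the open interval `I = (𝓛, 𝓡)`, where `𝓛 = max_{i ∈ S1 ∪ S4} (-d i)`
(or `-∞` if `S1 ∪ S4 = ∅`) and `𝓡 = min_{i ∈ S2 ∪ S3} d i` (or `+∞` if `S2 ∪ S3 = ∅`). -/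
def memI {s : ℕ} (S1 S2 S3 S4 : Finset (Fin s)) (d : Fin s → ℝ) (z : ℝ) : Prop :=
  (∀ i ∈ S1 ∪ S4, -d i < z) ∧ (∀ i ∈ S2 ∪ S3, z < d i)

/-- The multistability criterion: there exist pairwise distinct `d i`, a level `K` and two
distinct points of `I` where `g` takes the value `K` with negative derivative. -/
def MultistabCriterion {s : ℕ} (S1 S2 S3 S4 : Finset (Fin s)) (a : Fin s → ℝ) : Prop :=
  ∃ d : Fin s → ℝ, Function.Injective d ∧
    ∃ K z₁ z₂ : ℝ, z₁ ≠ z₂ ∧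
      memI S1 S2 S3 S4 d z₁ ∧ memI S1 S2 S3 S4 d z₂ ∧
      gFun S1 S2 S3 S4 a d z₁ = K ∧ gFun S1 S2 S3 S4 a d z₂ = K ∧
      gDeriv S1 S2 S3 S4 a d z₁ < 0 ∧ gDeriv S1 S2 S3 S4 a d z₂ < 0

open Filter Topology


theorem hasDerivAt_sum_log_add {s : ℕ} (S : Finset (Fin s)) (a d : Fin s → ℝ) {z : ℝ}
    (h : ∀ i ∈ S, 0 < z + d i) :
    HasDerivAt (fun z => ∑ i ∈ S, a i * Real.log (z + d i)) (∑ i ∈ S, a i / (z + d i)) z := by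
  apply HasDerivAt.fun_sum
  intro i hi
  have h1 : HasDerivAt (fun z : ℝ => z + d i) 1 z := (hasDerivAt_id z).add_const (d i)
  have h2 := (Real.hasDerivAt_log (h i hi).ne').comp z h1
  simpa [div_eq_mul_inv, mul_comm] using h2.const_mul (a i)

theorem hasDerivAt_sum_log_sub {s : ℕ} (S : Finset (Fin s)) (a d : Fin s → ℝ) {z : ℝ}
    (h : ∀ i ∈ S, 0 < d i - z) :
    HasDerivAt (fun z => ∑ i ∈ S, a i * Real.log (d i - z)) (-∑ i ∈ S, a i / (d i - z)) z := by
  rw [← Finset.sum_neg_distrib]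
  apply HasDerivAt.fun_sum
  intro i hi
  have h1 : HasDerivAt (fun z : ℝ => d i - z) (-1) z := (hasDerivAt_id z).const_sub (d i)
  have h2 := (Real.hasDerivAt_log (h i hi).ne').comp z h1
  have h3 := h2.const_mul (a i)
  exact h3.congr_deriv (by field_simp)

theorem hasDerivAt_gFun {s : ℕ} (S1 S2 S3 S4 : Finset (Fin s)) (a d : Fin s → ℝ) {z : ℝ}
    (h1 : ∀ i ∈ S1 ∪ S4, 0 < z + d i) (h2 : ∀ i ∈ S2 ∪ S3, 0 < d i - z) :
    HasDerivAt (gFun S1 S2 S3 S4 a d) (gDeriv S1 S2 S3 S4 a d z) z := by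
  have A1 := hasDerivAt_sum_log_add S1 a d (fun i hi => h1 i (by simp [hi]))
  have A4 := hasDerivAt_sum_log_add S4 a d (fun i hi => h1 i (by simp [hi]))
  have A2 := hasDerivAt_sum_log_sub S2 a d (fun i hi => h2 i (by simp [hi]))
  have A3 := hasDerivAt_sum_log_sub S3 a d (fun i hi => h2 i (by simp [hi]))
  have := ((A1.sub A2).add A3).sub A4
  exact this.congr_deriv (by simp [gDeriv]; ring)

open Finset

theorem key_ineq {s : ℕ} (S2 S3 : Finset (Fin s)) (hS3 : S3.Nonempty)
    (a : Fin s → ℝ) (ha : ∀ i, 0 < a i)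
    (hble : ∑ i ∈ S2, a i ≤ S3.inf' hS3 a)
    (x y : Fin s → ℝ) (hx : ∀ i ∈ S2, 0 ≤ x i) (hy : ∀ i ∈ S3, 0 ≤ y i)
    (hsum : ∑ i ∈ S3, a i * y i ≤ ∑ i ∈ S2, a i * x i) :
    ∑ i ∈ S3, a i * y i ^ 2 ≤ ∑ i ∈ S2, a i * x i ^ 2 := by
  set m := S3.inf' hS3 a with hm
  have hmpos : 0 < m := by
    obtain ⟨j, hj, hje⟩ := Finset.exists_mem_eq_inf' hS3 a
    rw [hm, hje]; exact ha j
  have h1 : m * ∑ i ∈ S3, a i * y i ^ 2 ≤ ∑ i ∈ S3, (a i * y i) ^ 2 := by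
    rw [Finset.mul_sum]
    refine Finset.sum_le_sum fun i hi => ?_
    have : m ≤ a i := Finset.inf'_le a hi
    have hy' := hy i hi
    nlinarith [sq_nonneg (y i), (ha i).le]
  have h2 : ∑ i ∈ S3, (a i * y i) ^ 2 ≤ (∑ i ∈ S3, a i * y i) ^ 2 :=
    Finset.sum_sq_le_sq_sum_of_nonneg fun i hi => mul_nonneg (ha i).le (hy i hi)
  have hynn : 0 ≤ ∑ i ∈ S3, a i * y i :=
    Finset.sum_nonneg fun i hi => mul_nonneg (ha i).le (hy i hi)
  have h3 : (∑ i ∈ S3, a i * y i) ^ 2 ≤ (∑ i ∈ S2, a i * x i) ^ 2 := by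
    apply pow_le_pow_left₀ hynn hsum
  have h4 : (∑ i ∈ S2, a i * x i) ^ 2 ≤ (∑ i ∈ S2, a i) * ∑ i ∈ S2, a i * x i ^ 2 := by
    have := Finset.sum_mul_sq_le_sq_mul_sq S2 (fun i => Real.sqrt (a i))
      (fun i => Real.sqrt (a i) * x i)
    have e1 : ∀ i ∈ S2, Real.sqrt (a i) * (Real.sqrt (a i) * x i) = a i * x i := by
      intro i _
      rw [← mul_assoc, Real.mul_self_sqrt (ha i).le]
    have e2 : ∀ i ∈ S2, Real.sqrt (a i) ^ 2 = a i := fun i _ => Real.sq_sqrt (ha i).le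
    have e3 : ∀ i ∈ S2, (Real.sqrt (a i) * x i) ^ 2 = a i * x i ^ 2 := by
      intro i _
      rw [mul_pow, Real.sq_sqrt (ha i).le]
    rwa [Finset.sum_congr rfl e1, Finset.sum_congr rfl e2, Finset.sum_congr rfl e3] at this
  have h5 : (∑ i ∈ S2, a i) * ∑ i ∈ S2, a i * x i ^ 2 ≤ m * ∑ i ∈ S2, a i * x i ^ 2 := by
    apply mul_le_mul_of_nonneg_right hble
    exact Finset.sum_nonneg fun i hi => mul_nonneg (ha i).le (sq_nonneg _)
  have := h1.trans (h2.trans (h3.trans (h4.trans h5)))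
  exact le_of_mul_le_mul_left this hmpos


theorem slope_lemma {f : ℝ → ℝ} {f' z : ℝ} (hf : HasDerivAt f f' z) (hneg : f' < 0) :
    (∀ᶠ w in 𝓝[>] z, f w < f z) ∧ (∀ᶠ w in 𝓝[<] z, f z < f w) := by
  have h := hasDerivAt_iff_tendsto_slope.1 hf
  have hev : ∀ᶠ w in 𝓝[≠] z, slope f z w < 0 := h.eventually (eventually_lt_nhds hneg)
  have hle : (𝓝[>] z) ≤ (𝓝[≠] z) := nhdsWithin_mono z fun w (hw : w ∈ Set.Ioi z) => ne_of_gt hw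
  have hle' : (𝓝[<] z) ≤ (𝓝[≠] z) := nhdsWithin_mono z fun w (hw : w ∈ Set.Iio z) => ne_of_lt hw
  constructor
  · filter_upwards [hev.filter_mono hle, self_mem_nhdsWithin] with w hw hw2
    rw [slope_def_field] at hw
    have hwz : (0:ℝ) < w - z := sub_pos.2 hw2
    rcases div_neg_iff.1 hw with ⟨h1, h2⟩ | ⟨h1, h2⟩
    · linarith
    · linarith
  · filter_upwards [hev.filter_mono hle', self_mem_nhdsWithin] with w hw hw2
    rw [slope_def_field] at hw
    have hwz : w - z < 0 := sub_neg.2 hw2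
    rcases div_neg_iff.1 hw with ⟨h1, h2⟩ | ⟨h1, h2⟩
    · linarith
    · linarith


theorem hasDerivAt_ratsum {s : ℕ} (S : Finset (Fin s)) (a d : Fin s → ℝ) {z : ℝ}
    (h : ∀ i ∈ S, 0 < d i - z) :
    HasDerivAt (fun z => ∑ i ∈ S, a i / (d i - z)) (∑ i ∈ S, a i / (d i - z) ^ 2) z := by
  apply HasDerivAt.fun_sum; intro i hi
  have h1 : HasDerivAt (fun z : ℝ => d i - z) (-1) z := (hasDerivAt_id z).const_sub (d i)
  have h2 := h1.inv (h i hi).ne'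
  have h3 := h2.const_mul (a i)
  have e1 : (fun y => a i * (d i - y)⁻¹) = fun y => a i / (d i - y) := by
    funext w; rw [div_eq_mul_inv]
  have e2 : a i * (- -1 / (d i - z) ^ 2) = a i / (d i - z) ^ 2 := by ring
  rw [← e1, ← e2]; exact h3


theorem forward_aux {s : ℕ} (S2 S3 S4 : Finset (Fin s)) (hS3 : S3.Nonempty) (hS4 : S4.Nonempty)
    (a : Fin s → ℝ) (ha : ∀ i, 0 < a i)
    (hble : ∑ i ∈ S2, a i ≤ S3.inf' hS3 a)
    (d : Fin s → ℝ) {z₁ z₂ : ℝ} (hlt : z₁ < z₂)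
    (hm1 : memI ∅ S2 S3 S4 d z₁) (hm2 : memI ∅ S2 S3 S4 d z₂)
    (hg : gFun ∅ S2 S3 S4 a d z₁ = gFun ∅ S2 S3 S4 a d z₂)
    (hd1 : gDeriv ∅ S2 S3 S4 a d z₁ < 0) (hd2 : gDeriv ∅ S2 S3 S4 a d z₂ < 0) : False := by
  set g := gFun ∅ S2 S3 S4 a d with hgdef
  set g' := gDeriv ∅ S2 S3 S4 a d with hg'def
  have hpos1 : ∀ z ∈ Set.Icc z₁ z₂, ∀ i ∈ (∅ : Finset (Fin s)) ∪ S4, 0 < z + d i := by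
    intro z hz i hi
    have := hm1.1 i hi
    linarith [hz.1]
  have hpos2 : ∀ z ∈ Set.Icc z₁ z₂, ∀ i ∈ S2 ∪ S3, 0 < d i - z := by
    intro z hz i hi
    have := hm2.2 i hi
    linarith [hz.2]
  have hder : ∀ z ∈ Set.Icc z₁ z₂, HasDerivAt g (g' z) z := fun z hz =>
    hasDerivAt_gFun _ _ _ _ a d (hpos1 z hz) (hpos2 z hz)
  obtain ⟨c, hcI, hcpos⟩ : ∃ c ∈ Set.Ioo z₁ z₂, 0 < g' c := by
    by_contra hcon
    push_neg at hcon
    have hanti : AntitoneOn g (Set.Icc z₁ z₂) := by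
      apply antitoneOn_of_deriv_nonpos (convex_Icc _ _)
      · exact fun z hz => (hder z hz).continuousAt.continuousWithinAt
      · intro z hz
        rw [interior_Icc] at hz
        exact (hder z (Set.mem_Icc_of_Ioo hz)).differentiableAt.differentiableWithinAt
      · intro z hz
        rw [interior_Icc] at hz
        rw [(hder z (Set.mem_Icc_of_Ioo hz)).deriv]
        exact hcon z hz
    obtain ⟨hx1, -⟩ := slope_lemma (hder z₁ ⟨le_refl _, hlt.le⟩) hd1
    obtain ⟨-, hy2⟩ := slope_lemma (hder z₂ ⟨hlt.le, le_refl _⟩) hd2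
    have hI : Set.Ioo z₁ z₂ ∈ 𝓝[>] z₁ := Ioo_mem_nhdsGT_of_mem ⟨le_refl _, hlt⟩
    obtain ⟨x, hgx, hxI⟩ := (hx1.and hI).exists
    have hI2 : Set.Ioo x z₂ ∈ 𝓝[<] z₂ := Ioo_mem_nhdsLT_of_mem ⟨hxI.2, le_refl _⟩
    obtain ⟨y, hgy, hyI⟩ := (hy2.and hI2).exists
    have hxy : g y ≤ g x :=
      hanti ⟨hxI.1.le, hxI.2.le⟩ ⟨(hxI.1.trans hyI.1).le, hyI.2.le⟩ hyI.1.le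
    rw [hg] at hgx
    linarith
  have hcmem : c ∈ Set.Icc z₁ z₂ := ⟨hcI.1.le, hcI.2.le⟩
  have hsub : Set.Icc c z₂ ⊆ Set.Icc z₁ z₂ := fun t ht => ⟨hcI.1.le.trans ht.1, ht.2⟩
  set hfun := fun z => ∑ i ∈ S2, a i / (d i - z) - ∑ i ∈ S3, a i / (d i - z) with hhdef
  set h'fun := fun z => ∑ i ∈ S2, a i / (d i - z) ^ 2 - ∑ i ∈ S3, a i / (d i - z) ^ 2
    with hh'def
  set s4fun := fun z => ∑ i ∈ S4, a i / (z + d i) with hs4def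
  have hgsplit : ∀ z, g' z = hfun z - s4fun z := by
    intro z
    simp only [hg'def, gDeriv, hhdef, hs4def, Finset.sum_empty]
    ring
  have hs4pos : ∀ z ∈ Set.Icc z₁ z₂, 0 < s4fun z := fun z hz =>
    Finset.sum_pos (fun i hi => div_pos (ha i) (hpos1 z hz i (by simp [hi]))) hS4
  have hs4anti : ∀ u ∈ Set.Icc z₁ z₂, ∀ v ∈ Set.Icc z₁ z₂, u ≤ v → s4fun v ≤ s4fun u := by
    intro u hu v hv huv
    apply Finset.sum_le_sum
    intro i hi
    have h1 : 0 < u + d i := hpos1 u hu i (by simp [hi])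
    apply div_le_div_of_nonneg_left (ha i).le h1 (by linarith)
  have hderh : ∀ z ∈ Set.Icc z₁ z₂, HasDerivAt hfun (h'fun z) z := by
    intro z hz
    exact (hasDerivAt_ratsum S2 a d fun i hi => hpos2 z hz i (by simp [hi])).sub
      (hasDerivAt_ratsum S3 a d fun i hi => hpos2 z hz i (by simp [hi]))
  have hkey : ∀ z ∈ Set.Icc z₁ z₂, 0 ≤ hfun z → 0 ≤ h'fun z := by
    intro z hz h0
    have hx : ∀ i ∈ S2, 0 ≤ (d i - z)⁻¹ := fun i hi =>
      (inv_pos.2 (hpos2 z hz i (by simp [hi]))).le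
    have hy : ∀ i ∈ S3, 0 ≤ (d i - z)⁻¹ := fun i hi =>
      (inv_pos.2 (hpos2 z hz i (by simp [hi]))).le
    have e2 : ∀ (S : Finset (Fin s)), ∑ i ∈ S, a i / (d i - z) = ∑ i ∈ S, a i * (d i - z)⁻¹ :=
      fun S => Finset.sum_congr rfl fun i _ => div_eq_mul_inv _ _
    have e3 : ∀ (S : Finset (Fin s)),
        ∑ i ∈ S, a i / (d i - z) ^ 2 = ∑ i ∈ S, a i * ((d i - z)⁻¹) ^ 2 :=
      fun S => Finset.sum_congr rfl fun i _ => by rw [div_eq_mul_inv, inv_pow]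
    have hsum : ∑ i ∈ S3, a i * (d i - z)⁻¹ ≤ ∑ i ∈ S2, a i * (d i - z)⁻¹ := by
      have := h0
      rw [hhdef] at this
      simp only [e2] at this
      linarith
    have := key_ineq S2 S3 hS3 a ha hble (fun i => (d i - z)⁻¹) (fun i => (d i - z)⁻¹)
      hx hy hsum
    rw [hh'def]
    simp only [e3]
    linarith
  have hhc : 0 < hfun c := by
    have := hgsplit c
    have := hs4pos c hcmem
    linarith
  have hposall : ∀ w ∈ Set.Icc c z₂, 0 < hfun w := by
    by_contra hcon
    push_neg at hcon
    obtain ⟨w₀, hw₀, hle0⟩ := hcon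
    set S := Set.Icc c z₂ ∩ hfun ⁻¹' Set.Iic 0 with hSdef
    have hcont : ContinuousOn hfun (Set.Icc c z₂) := fun t ht =>
      (hderh t (hsub ht)).continuousAt.continuousWithinAt
    have hScl : IsClosed S := hcont.preimage_isClosed_of_isClosed isClosed_Icc isClosed_Iic
    have hSne : S.Nonempty := ⟨w₀, hw₀, hle0⟩
    have hbdd : BddBelow S := ⟨c, fun t ht => ht.1.1⟩
    set w := sInf S with hwdef
    have hwS : w ∈ S := hScl.csInf_mem hSne hbdd
    have hwle : hfun w ≤ 0 := hwS.2
    have hcw : c < w := by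
      rcases lt_or_eq_of_le hwS.1.1 with h | h
      · exact h
      · exfalso; rw [← h] at hwle; linarith
    have hmono : MonotoneOn hfun (Set.Icc c w) := by
      apply monotoneOn_of_deriv_nonneg (convex_Icc _ _)
      · exact fun t ht => (hderh t (hsub ⟨ht.1, ht.2.trans hwS.1.2⟩)).continuousAt.continuousWithinAt
      · intro t ht
        rw [interior_Icc] at ht
        exact (hderh t (hsub ⟨ht.1.le, ht.2.le.trans hwS.1.2⟩)).differentiableAt.differentiableWithinAt
      · intro t ht
        rw [interior_Icc] at ht
        have htmem : t ∈ Set.Icc c z₂ := ⟨ht.1.le, ht.2.le.trans hwS.1.2⟩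
        rw [(hderh t (hsub htmem)).deriv]
        apply hkey t (hsub htmem)
        by_contra hneg
        push_neg at hneg
        have : t ∈ S := ⟨htmem, le_of_lt hneg⟩
        exact absurd (csInf_le hbdd this) (not_le.2 ht.2)
    have := hmono ⟨le_refl _, hcw.le⟩ ⟨hcw.le, le_refl _⟩ hcw.le
    linarith
  have hmono2 : MonotoneOn hfun (Set.Icc c z₂) := by
    apply monotoneOn_of_deriv_nonneg (convex_Icc _ _)
    · exact fun t ht => (hderh t (hsub ht)).continuousAt.continuousWithinAt
    · intro t ht
      rw [interior_Icc] at ht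
      exact (hderh t (hsub (Set.mem_Icc_of_Ioo ht))).differentiableAt.differentiableWithinAt
    · intro t ht
      rw [interior_Icc] at ht
      rw [(hderh t (hsub (Set.mem_Icc_of_Ioo ht))).deriv]
      exact hkey t (hsub (Set.mem_Icc_of_Ioo ht)) (hposall t (Set.mem_Icc_of_Ioo ht)).le
  have hfz : hfun c ≤ hfun z₂ :=
    hmono2 ⟨le_refl _, hcI.2.le⟩ ⟨hcI.2.le, le_refl _⟩ hcI.2.le
  have h1 := hgsplit c
  have h2 := hgsplit z₂
  have h3 := hs4anti c hcmem z₂ ⟨hlt.le, le_refl _⟩ hcI.2.le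
  linarith


theorem cross_lemma {a b K : ℝ} {g g' : ℝ → ℝ} (hab : a < b)
    (hder : ∀ z ∈ Set.Icc a b, HasDerivAt g (g' z) z)
    (hKa : K < g a) (hKb : g b < K) :
    ∃ z ∈ Set.Ico a b, g z = K ∧ g' z ≤ 0 := by
  have hcont : ContinuousOn g (Set.Icc a b) := fun t ht =>
    (hder t ht).continuousAt.continuousWithinAt
  set E := Set.Icc a b ∩ g ⁻¹' {K} with hEdef
  have hKmem : K ∈ Set.Icc (g b) (g a) := ⟨hKb.le, hKa.le⟩
  obtain ⟨x₀, hx₀I, hx₀⟩ := intermediate_value_Icc' hab.le hcont hKmem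
  have hEne : E.Nonempty := ⟨x₀, hx₀I, hx₀⟩
  have hEcl : IsClosed E := hcont.preimage_isClosed_of_isClosed isClosed_Icc isClosed_singleton
  have hbdd : BddAbove E := ⟨b, fun t ht => ht.1.2⟩
  set z := sSup E with hzdef
  have hzE : E z := hEcl.csSup_mem hEne hbdd
  have hgz : g z = K := hzE.2
  have hzb : z < b := by
    rcases lt_or_eq_of_le hzE.1.2 with h | h
    · exact h
    · exfalso; rw [h] at hgz; linarith
  have hless : ∀ t ∈ Set.Ioc z b, g t < K := by
    intro t ht
    by_contra hge
    push_neg at hge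
    have htI : t ∈ Set.Icc a b := ⟨hzE.1.1.trans ht.1.le, ht.2⟩
    rcases lt_or_eq_of_le hge with h | h
    · have hsub : Set.Icc t b ⊆ Set.Icc a b := fun r hr => ⟨htI.1.trans hr.1, hr.2⟩
      have hKmem2 : K ∈ Set.Icc (g b) (g t) := ⟨hKb.le, h.le⟩
      obtain ⟨r, hrI, hr⟩ := intermediate_value_Icc' ht.2 (hcont.mono hsub) hKmem2
      have : r ∈ E := ⟨hsub hrI, hr⟩
      have := le_csSup hbdd this
      have : t ≤ z := le_trans hrI.1 this |>.trans (le_refl _)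
      linarith [ht.1]
    · have : t ∈ E := ⟨htI, h.symm⟩
      have := le_csSup hbdd this
      linarith [ht.1]
  have hzI : z ∈ Set.Icc a b := hzE.1
  have hderz := hder z hzI
  have htend := hasDerivAt_iff_tendsto_slope.1 hderz
  have hle : (𝓝[>] z) ≤ (𝓝[≠] z) := nhdsWithin_mono z fun w (hw : w ∈ Set.Ioi z) => ne_of_gt hw
  have hev : ∀ᶠ w in 𝓝[>] z, slope g z w ≤ 0 := by
    filter_upwards [Ioc_mem_nhdsGT_of_mem ⟨le_refl _, hzb⟩] with w hw
    rw [slope_def_field, hgz]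
    apply div_nonpos_of_nonpos_of_nonneg
    · linarith [hless w hw]
    · linarith [hw.1]
  have : g' z ≤ 0 := le_of_tendsto (htend.mono_left hle) hev
  exact ⟨z, ⟨hzI.1, hzb⟩, hgz, this⟩

theorem slope_lemma_pos {f : ℝ → ℝ} {f' z : ℝ} (hf : HasDerivAt f f' z) (hpos : 0 < f') :
    ∀ᶠ w in 𝓝[>] z, f z < f w := by
  have h := hasDerivAt_iff_tendsto_slope.1 hf
  have hev : ∀ᶠ w in 𝓝[≠] z, 0 < slope f z w := h.eventually (eventually_gt_nhds hpos)
  have hle : (𝓝[>] z) ≤ (𝓝[≠] z) := nhdsWithin_mono z fun w (hw : w ∈ Set.Ioi z) => ne_of_gt hw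
  filter_upwards [hev.filter_mono hle, self_mem_nhdsWithin] with w hw hw2
  rw [slope_def_field] at hw
  have hwz : (0:ℝ) < w - z := sub_pos.2 hw2
  rcases div_pos_iff.1 hw with ⟨h1, h2⟩ | ⟨h1, h2⟩
  · linarith
  · linarith

theorem extraction {L R : ℝ} {g g' : ℝ → ℝ}
    (hder : ∀ z ∈ Set.Ioo L R, HasDerivAt g (g' z) z)
    (hanal : AnalyticOnNhd ℝ g' (Set.Ioo L R))
    {z₀ : ℝ} (hz₀ : z₀ ∈ Set.Ioo L R) (hpos : 0 < g' z₀)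
    (htop : Filter.Tendsto g (𝓝[>] L) Filter.atTop)
    (hbot : Filter.Tendsto g (𝓝[<] R) Filter.atBot) :
    ∃ K z₁ z₂ : ℝ, z₁ ∈ Set.Ioo L R ∧ z₂ ∈ Set.Ioo L R ∧ z₁ ≠ z₂ ∧
      g z₁ = K ∧ g z₂ = K ∧ g' z₁ < 0 ∧ g' z₂ < 0 := by
  -- find v > z₀ with g z₀ < g v
  have hev := slope_lemma_pos (hder z₀ hz₀) hpos
  have hIv : Set.Ioo z₀ R ∈ 𝓝[>] z₀ := Ioo_mem_nhdsGT_of_mem ⟨le_refl _, hz₀.2⟩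
  obtain ⟨v, hgv, hvI⟩ := (hev.and hIv).exists
  -- find p
  have hIp : Set.Ioo L z₀ ∈ 𝓝[>] L := Ioo_mem_nhdsGT_of_mem ⟨le_refl _, hz₀.1⟩
  obtain ⟨p, hgp, hpI⟩ := ((htop.eventually_gt_atTop (g v)).and hIp).exists
  -- find q
  have hIq : Set.Ioo v R ∈ 𝓝[<] R := Ioo_mem_nhdsLT_of_mem ⟨hvI.2, le_refl _⟩
  obtain ⟨q, hgq, hqI⟩ := ((hbot.eventually_lt_atBot (g z₀)).and hIq).exists
  have hLp : L < p := hpI.1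
  have hpz₀ : p < z₀ := hpI.2
  have hz₀v : z₀ < v := hvI.1
  have hvq : v < q := hqI.1
  have hqR : q < R := hqI.2
  have hpqsub : Set.Icc p q ⊆ Set.Ioo L R := fun t ht =>
    ⟨hLp.trans_le ht.1, lt_of_le_of_lt ht.2 hqR⟩
  -- finiteness of critical values on [p, q]
  set Z := {z ∈ Set.Icc p q | g' z = 0} with hZdef
  have hZfin : Z.Finite := by
    by_contra hinf
    have hinf : Z.Infinite := hinf
    obtain ⟨x, hxK, hacc⟩ := hinf.exists_accPt_of_subset_isCompact isCompact_Icc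
      (fun t ht => ht.1)
    have hxI : x ∈ Set.Ioo L R := hpqsub hxK
    have hfreq : ∃ᶠ y in 𝓝[≠] x, g' y = 0 := by
      have h1 := (accPt_iff_frequently (x := x) (C := Z)).1 hacc
      rw [frequently_nhdsWithin_iff]
      exact h1.mono fun y hy => ⟨hy.2.2, hy.1⟩
    have := hanal.eqOn_zero_of_preconnected_of_frequently_eq_zero
      isPreconnected_Ioo hxI hfreq
    have := this hz₀
    simp only [Pi.zero_apply] at this
    linarith
  have hFfin : (g '' Z).Finite := hZfin.image g
  -- pick K
  have hIooinf : (Set.Ioo (g z₀) (g v)).Infinite := Set.infinite_coe_iff.1 (Set.Ioo.infinite hgv)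
  obtain ⟨K, hKIoo, hKF⟩ := (hIooinf.diff hFfin).nonempty
  have hKz₀ : g z₀ < K := hKIoo.1
  have hKv : K < g v := hKIoo.2
  -- crossing on [p, z₀] : g p > g v > K, g z₀ < K
  obtain ⟨z₁, hz₁I, hgz₁, hdz₁⟩ := cross_lemma hpz₀
    (fun t ht => hder t (hpqsub ⟨ht.1, ht.2.trans (hz₀v.trans hvq).le⟩))
    (hKv.trans hgp) hKz₀
  -- crossing on [v, q] : g v > K, g q < g z₀ < K
  obtain ⟨z₂, hz₂I, hgz₂, hdz₂⟩ := cross_lemma hvq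
    (fun t ht => hder t (hpqsub ⟨(hpz₀.trans hz₀v).le.trans ht.1, ht.2⟩))
    hKv (hgq.trans hKz₀)
  have hz₁pq : z₁ ∈ Set.Icc p q := ⟨hz₁I.1, hz₁I.2.le.trans (hz₀v.trans hvq).le⟩
  have hz₂pq : z₂ ∈ Set.Icc p q := ⟨(hpz₀.trans hz₀v).le.trans hz₂I.1, hz₂I.2.le⟩
  have hd₁ : g' z₁ < 0 := by
    rcases lt_or_eq_of_le hdz₁ with h | h
    · exact h
    · exfalso; exact hKF ⟨z₁, ⟨hz₁pq, h ▸ rfl⟩, hgz₁⟩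
  have hd₂ : g' z₂ < 0 := by
    rcases lt_or_eq_of_le hdz₂ with h | h
    · exact h
    · exfalso; exact hKF ⟨z₂, ⟨hz₂pq, h ▸ rfl⟩, hgz₂⟩
  exact ⟨K, z₁, z₂, hpqsub hz₁pq, hpqsub hz₂pq,
    (hz₁I.2.trans (hz₀v.trans_le hz₂I.1)).ne, hgz₁, hgz₂, hd₁, hd₂⟩


theorem analytic_ratsum_sub {s : ℕ} (S : Finset (Fin s)) (a d : Fin s → ℝ) {U : Set ℝ}
    (h : ∀ z ∈ U, ∀ i ∈ S, d i - z ≠ 0) :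
    AnalyticOnNhd ℝ (fun z => ∑ i ∈ S, a i / (d i - z)) U := by
  apply Finset.analyticOnNhd_fun_sum
  intro i hi
  exact analyticOnNhd_const.div (analyticOnNhd_const.sub (analyticOnNhd_id))
    fun z hz => h z hz i hi

theorem analytic_ratsum_add {s : ℕ} (S : Finset (Fin s)) (a d : Fin s → ℝ) {U : Set ℝ}
    (h : ∀ z ∈ U, ∀ i ∈ S, z + d i ≠ 0) :
    AnalyticOnNhd ℝ (fun z => ∑ i ∈ S, a i / (z + d i)) U := by
  apply Finset.analyticOnNhd_fun_sum
  intro i hi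
  exact analyticOnNhd_const.div ((analyticOnNhd_id).add analyticOnNhd_const)
    fun z hz => h z hz i hi

theorem analytic_gDeriv {s : ℕ} (S1 S2 S3 S4 : Finset (Fin s)) (a d : Fin s → ℝ) {U : Set ℝ}
    (h1 : ∀ z ∈ U, ∀ i ∈ S1 ∪ S4, z + d i ≠ 0) (h2 : ∀ z ∈ U, ∀ i ∈ S2 ∪ S3, d i - z ≠ 0) :
    AnalyticOnNhd ℝ (gDeriv S1 S2 S3 S4 a d) U := by
  have A1 := analytic_ratsum_add S1 a d fun z hz i hi => h1 z hz i (by simp [hi])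
  have A4 := analytic_ratsum_add S4 a d fun z hz i hi => h1 z hz i (by simp [hi])
  have A2 := analytic_ratsum_sub S2 a d fun z hz i hi => h2 z hz i (by simp [hi])
  have A3 := analytic_ratsum_sub S3 a d fun z hz i hi => h2 z hz i (by simp [hi])
  exact ((A1.add A2).sub A3).sub A4


set_option maxHeartbeats 3200000 in
theorem reverse_dir {s : ℕ} (S2 S3 S4 : Finset (Fin s))
    (h23 : Disjoint S2 S3) (h24 : Disjoint S2 S4) (h34 : Disjoint S3 S4)
    (a : Fin s → ℝ) (ha : ∀ i, 0 < a i)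
    (hS3 : S3.Nonempty) (hS4 : S4.Nonempty)
    (hlt : S3.inf' hS3 a < ∑ i ∈ S2, a i) :
    MultistabCriterion ∅ S2 S3 S4 a := by
  classical
  obtain ⟨j, hjS3, hje⟩ := Finset.exists_mem_eq_inf' hS3 a
  set m := S3.inf' hS3 a with hmdef
  set b := ∑ i ∈ S2, a i with hbdef
  have hmpos : 0 < m := hje ▸ ha j
  have hbm : m < b := hlt
  set t : ℝ := 3 * m / (b - m) with htdef
  have htpos : 0 < t := by
    apply div_pos (by linarith) (by linarith)
  set A := ∑ i : Fin s, a i with hAdef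
  have hAnn : 0 ≤ A := Finset.sum_nonneg fun i _ => (ha i).le
  set ε : ℝ := min (1/(2*t+2)) (m/((t*(t+2))*(2*A+1))) with hεdef
  have hεpos : 0 < ε := lt_min (by positivity) (by positivity)
  have hε1 : ε ≤ 1/(2*t+2) := min_le_left _ _
  have hε2 : ε ≤ m/((t*(t+2))*(2*A+1)) := min_le_right _ _
  have htε : t * ε < 1/2 := by
    have h1 : t * ε ≤ t * (1/(2*t+2)) := mul_le_mul_of_nonneg_left hε1 htpos.le
    have h2 : t * (1/(2*t+2)) < 1/2 := by
      rw [mul_one_div, div_lt_div_iff₀ (by linarith) (by norm_num)]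
      linarith
    linarith
  have h2ε : 2 * ε < 1 := by
    have h22 : 1/(2*t+2) < 1/2 := by
      rw [div_lt_div_iff₀ (by linarith) (by norm_num)]
      linarith
    linarith
  -- the d function
  have hjS2 : j ∉ S2 := fun h => (Finset.disjoint_left.1 h23) h hjS3
  set d : Fin s → ℝ := fun i =>
    if i = j then 1 else if i ∈ S2 then 1 + ε*(1+(i:ℝ)/s) else 2*(1+(i:ℝ)/s) with hddef
  have hspos : (0:ℝ) < s := by
    have : 0 < s := j.pos
    exact_mod_cast this
  have hfrac : ∀ i : Fin s, 0 ≤ (i:ℝ)/s ∧ (i:ℝ)/s < 1 := by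
    intro i
    constructor
    · positivity
    · rw [div_lt_one hspos]
      exact_mod_cast i.2
  have hdj : d j = 1 := by simp [hddef]
  have hdS2 : ∀ i ∈ S2, 1 + ε ≤ d i ∧ d i < 1 + 2*ε := by
    intro i hi
    have hij : i ≠ j := fun h => hjS2 (h ▸ hi)
    obtain ⟨h0, h1⟩ := hfrac i
    constructor
    · simp only [hddef, if_neg hij, if_pos hi]
      nlinarith
    · simp only [hddef, if_neg hij, if_pos hi]
      nlinarith
  have hdO : ∀ i : Fin s, i ≠ j → i ∉ S2 → 2 ≤ d i ∧ d i < 4 := by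
    intro i hij hiS2
    obtain ⟨h0, h1⟩ := hfrac i
    constructor
    · simp only [hddef, if_neg hij, if_neg hiS2]; linarith
    · simp only [hddef, if_neg hij, if_neg hiS2]; linarith
  have hd1le : ∀ i : Fin s, 1 ≤ d i := by
    intro i
    by_cases hij : i = j
    · rw [hij, hdj]
    · by_cases hiS2 : i ∈ S2
      · linarith [(hdS2 i hiS2).1, hεpos]
      · linarith [(hdO i hij hiS2).1]
  have hcast : ∀ i k : Fin s, (i:ℝ)/s = (k:ℝ)/s → i = k := by
    intro i k h
    field_simp at h
    have h2 : (i:ℕ) = (k:ℕ) := by exact_mod_cast h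
    exact Fin.ext h2
  have hinj : Function.Injective d := by
    intro i k heq
    by_cases hij : i = j <;> by_cases hkj : k = j
    · rw [hij, hkj]
    · exfalso
      rw [hij, hdj] at heq
      by_cases hkS2 : k ∈ S2
      · have := (hdS2 k hkS2).1; rw [← heq] at this; linarith [hεpos]
      · have := (hdO k hkj hkS2).1; rw [← heq] at this; linarith
    · exfalso
      rw [hkj, hdj] at heq
      by_cases hiS2 : i ∈ S2
      · have := (hdS2 i hiS2).1; rw [heq] at this; linarith [hεpos]
      · have := (hdO i hij hiS2).1; rw [heq] at this; linarith
    · by_cases hiS2 : i ∈ S2 <;> by_cases hkS2 : k ∈ S2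
      · simp only [hddef, if_neg hij, if_pos hiS2, if_neg hkj, if_pos hkS2] at heq
        have h1 : ε * (1+(i:ℝ)/s) = ε * (1+(k:ℝ)/s) := by linarith
        have h2 := mul_left_cancel₀ hεpos.ne' h1
        exact hcast i k (by linarith)
      · exfalso
        have h1 := (hdS2 i hiS2).2
        have h2 := (hdO k hkj hkS2).1
        rw [heq] at h1; linarith
      · exfalso
        have h1 := (hdS2 k hkS2).2
        have h2 := (hdO i hij hiS2).1
        rw [← heq] at h1; linarith
      · simp only [hddef, if_neg hij, if_neg hiS2, if_neg hkj, if_neg hkS2] at heq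
        have : (i:ℝ)/s = (k:ℝ)/s := by linarith
        exact hcast i k this
  -- the left endpoint
  obtain ⟨i₀, hi₀S4, hi₀⟩ := Finset.exists_mem_eq_inf' hS4 d
  set L : ℝ := -d i₀ with hLdef
  have hi₀j : i₀ ≠ j := fun h => (Finset.disjoint_right.1 h34) hi₀S4 (h ▸ hjS3)
  have hi₀S2 : i₀ ∉ S2 := fun h => (Finset.disjoint_left.1 h24) h hi₀S4
  have hdi₀ : 2 ≤ d i₀ ∧ d i₀ < 4 := hdO i₀ hi₀j hi₀S2
  have hL2 : L ≤ -2 := by rw [hLdef]; linarith [hdi₀.1]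
  have hdinf : ∀ i ∈ S4, d i₀ ≤ d i := fun i hi => hi₀ ▸ Finset.inf'_le d hi
  have hpos1 : ∀ z ∈ Set.Ioo L (1:ℝ), ∀ i ∈ (∅ : Finset (Fin s)) ∪ S4, 0 < z + d i := by
    intro z hz i hi
    rw [Finset.empty_union] at hi
    have h1 := hdinf i hi
    have h2 := hz.1
    rw [hLdef] at h2
    linarith
  have hpos2 : ∀ z ∈ Set.Ioo L (1:ℝ), ∀ i ∈ S2 ∪ S3, 0 < d i - z := by
    intro z hz i _
    have := hd1le i
    linarith [hz.2]
  have hmemI : ∀ z ∈ Set.Ioo L (1:ℝ), memI ∅ S2 S3 S4 d z := by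
    intro z hz
    constructor
    · intro i hi
      have := hpos1 z hz i hi
      linarith
    · intro i hi
      have := hpos2 z hz i hi
      linarith
  have hder : ∀ z ∈ Set.Ioo L (1:ℝ),
      HasDerivAt (gFun ∅ S2 S3 S4 a d) (gDeriv ∅ S2 S3 S4 a d z) z := fun z hz =>
    hasDerivAt_gFun _ _ _ _ a d (hpos1 z hz) (hpos2 z hz)
  have hanal : AnalyticOnNhd ℝ (gDeriv ∅ S2 S3 S4 a d) (Set.Ioo L 1) :=
    analytic_gDeriv ∅ S2 S3 S4 a d (fun z hz i hi => (hpos1 z hz i hi).ne')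
      (fun z hz i hi => (hpos2 z hz i hi).ne')
  -- the point z₀ where the derivative is positive
  set z₀ : ℝ := 1 - t*ε with hz₀def
  have htεpos : 0 < t * ε := mul_pos htpos hεpos
  have hz₀mem : z₀ ∈ Set.Ioo L (1:ℝ) := by
    constructor
    · rw [hz₀def]; linarith
    · rw [hz₀def]; linarith
  have ht2pos : (0:ℝ) < t + 2 := by linarith
  have hP1 : (0:ℝ) < (t+2)*ε := mul_pos ht2pos hεpos
  have hP2 : (0:ℝ) < t*ε := mul_pos htpos hεpos
  have hP3 : (0:ℝ) < t*(t+2)*ε := mul_pos (mul_pos htpos ht2pos) hεpos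
  have hP4 : (0:ℝ) < 2*A+1 := by linarith
  have hεne : ((t+2)*ε) ≠ 0 := hP1.ne'
  have hS2sum : b/((t+2)*ε) ≤ ∑ i ∈ S2, a i / (d i - z₀) := by
    rw [hbdef, Finset.sum_div]
    apply Finset.sum_le_sum
    intro i hi
    have h1 := (hdS2 i hi).1
    have h2 := (hdS2 i hi).2
    have hd0 : 0 < d i - z₀ := by rw [hz₀def]; linarith
    apply div_le_div_of_nonneg_left (ha i).le hd0
    rw [hz₀def]; linarith
  have hS3e : ∀ i ∈ S3.erase j, a i / (d i - z₀) ≤ a i := by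
    intro i hi
    have hij : i ≠ j := Finset.ne_of_mem_erase hi
    have hiS3 : i ∈ S3 := Finset.mem_of_mem_erase hi
    have hiS2 : i ∉ S2 := fun h => (Finset.disjoint_left.1 h23) h hiS3
    have h1 := (hdO i hij hiS2).1
    apply div_le_self (ha i).le
    rw [hz₀def]; linarith
  have hsum_erase : ∑ i ∈ S3.erase j, a i ≤ A := by
    rw [hAdef]
    apply Finset.sum_le_sum_of_subset_of_nonneg (Finset.subset_univ _)
    intro i _ _
    exact (ha i).le
  have hS3sum : ∑ i ∈ S3, a i / (d i - z₀) ≤ m/(t*ε) + A := by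
    rw [← Finset.add_sum_erase S3 _ hjS3]
    have hj1 : a j / (d j - z₀) = m/(t*ε) := by
      rw [hdj, hje, hz₀def]
      ring_nf
    rw [hj1]
    have : ∑ i ∈ S3.erase j, a i / (d i - z₀) ≤ A :=
      le_trans (Finset.sum_le_sum hS3e) hsum_erase
    linarith
  have hS4sum : ∑ i ∈ S4, a i / (z₀ + d i) ≤ A := by
    have hterm : ∀ i ∈ S4, a i / (z₀ + d i) ≤ a i := by
      intro i hi
      have hij : i ≠ j := fun h => (Finset.disjoint_right.1 h34) hi (h ▸ hjS3)
      have hiS2 : i ∉ S2 := fun h => (Finset.disjoint_left.1 h24) h hi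
      have h1 := (hdO i hij hiS2).1
      apply div_le_self (ha i).le
      rw [hz₀def]; linarith
    apply le_trans (Finset.sum_le_sum hterm)
    rw [hAdef]
    apply Finset.sum_le_sum_of_subset_of_nonneg (Finset.subset_univ _)
    intro i _ _
    exact (ha i).le
  have ht3 : t * (b - m) = 3 * m := by
    rw [htdef, div_mul_cancel₀ _ (by linarith : b - m ≠ 0)]
  have hkeybm : b * t - m * (t + 2) = m := by linear_combination ht3
  have he1 : b/((t+2)*ε) = (b*t)/(t*(t+2)*ε) := by
    rw [div_eq_div_iff hP1.ne' hP3.ne']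
    ring
  have he2 : m/(t*ε) = (m*(t+2))/(t*(t+2)*ε) := by
    rw [div_eq_div_iff hP2.ne' hP3.ne']
    ring
  have he3 : b/((t+2)*ε) - m/(t*ε) = m/(t*(t+2)*ε) := by
    rw [he1, he2, div_sub_div_same, hkeybm]
  have hεle : (2*A+1) * (t*(t+2)*ε) ≤ m := by
    have hX : (0:ℝ) < t*(t+2)*(2*A+1) := mul_pos (mul_pos htpos ht2pos) hP4
    have h5 := (le_div_iff₀ hX).1 hε2
    have he : (2*A+1) * (t*(t+2)*ε) = ε * (t*(t+2)*(2*A+1)) := by ring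
    rw [he]
    exact h5
  have hfrac2 : 2*A+1 ≤ m/(t*(t+2)*ε) := by
    rw [le_div_iff₀ hP3]
    exact hεle
  have hderivpos : 0 < gDeriv ∅ S2 S3 S4 a d z₀ := by
    have : gDeriv ∅ S2 S3 S4 a d z₀ = ∑ i ∈ S2, a i / (d i - z₀)
        - ∑ i ∈ S3, a i / (d i - z₀) - ∑ i ∈ S4, a i / (z₀ + d i) := by
      simp [gDeriv]
    rw [this]
    have hmain : b/((t+2)*ε) - (m/(t*ε) + A) - A ≥ 1 := by
      have := he3
      linarith
    linarith
  -- limit at the right endpoint 1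
  have hbot : Filter.Tendsto (gFun ∅ S2 S3 S4 a d) (𝓝[<] (1:ℝ)) Filter.atBot := by
    have hsplitR : ∀ z, gFun ∅ S2 S3 S4 a d z =
        (- ∑ i ∈ S2, a i * Real.log (d i - z) + ∑ i ∈ S3.erase j, a i * Real.log (d i - z)
          - ∑ i ∈ S4, a i * Real.log (z + d i)) + a j * Real.log (1 - z) := by
      intro z
      simp only [gFun, Finset.sum_empty]
      rw [← Finset.add_sum_erase S3 _ hjS3, hdj]
      ring
    have hcont1 : ContinuousAt (fun z => ∑ i ∈ S2, a i * Real.log (d i - z)) 1 :=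
      (hasDerivAt_sum_log_sub S2 a d
        (fun i hi => by linarith [(hdS2 i hi).1, hεpos])).continuousAt
    have hcont2 : ContinuousAt (fun z => ∑ i ∈ S3.erase j, a i * Real.log (d i - z)) 1 := by
      apply (hasDerivAt_sum_log_sub (S3.erase j) a d (fun i hi => ?_)).continuousAt
      have hij : i ≠ j := Finset.ne_of_mem_erase hi
      have hiS2 : i ∉ S2 := fun h => (Finset.disjoint_left.1 h23) h (Finset.mem_of_mem_erase hi)
      linarith [(hdO i hij hiS2).1]
    have hcont3 : ContinuousAt (fun z => ∑ i ∈ S4, a i * Real.log (z + d i)) 1 := by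
      apply (hasDerivAt_sum_log_add S4 a d (fun i hi => ?_)).continuousAt
      have hij : i ≠ j := fun h => (Finset.disjoint_right.1 h34) hi (h ▸ hjS3)
      have hiS2 : i ∉ S2 := fun h => (Finset.disjoint_left.1 h24) h hi
      linarith [(hdO i hij hiS2).1]
    have hC : ContinuousAt (fun z => - ∑ i ∈ S2, a i * Real.log (d i - z)
        + ∑ i ∈ S3.erase j, a i * Real.log (d i - z)
        - ∑ i ∈ S4, a i * Real.log (z + d i)) 1 := (hcont1.neg.add hcont2).sub hcont3
    have hT1 : Filter.Tendsto (fun z : ℝ => 1 - z) (𝓝[<] (1:ℝ)) (𝓝[>] (0:ℝ)) := by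
      apply tendsto_nhdsWithin_of_tendsto_nhds_of_eventually_within
      · have h0 : Filter.Tendsto (fun z : ℝ => 1 - z) (𝓝 (1:ℝ)) (𝓝 (0:ℝ)) := by
          have hc : Continuous (fun z : ℝ => 1 - z) := by fun_prop
          have := hc.tendsto (1:ℝ)
          simpa using this
        exact h0.mono_left nhdsWithin_le_nhds
      · filter_upwards [self_mem_nhdsWithin] with z hz
        simp only [Set.mem_Iio] at hz
        simp only [Set.mem_Ioi]
        linarith
    have hT2 : Filter.Tendsto (fun z : ℝ => Real.log (1 - z)) (𝓝[<] (1:ℝ)) Filter.atBot :=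
      Real.tendsto_log_nhdsGT_zero.comp hT1
    have hT3 : Filter.Tendsto (fun z : ℝ => a j * Real.log (1 - z)) (𝓝[<] (1:ℝ))
        Filter.atBot := hT2.const_mul_atBot (ha j)
    have hcomb := (hC.tendsto.mono_left nhdsWithin_le_nhds).add_atBot hT3
    exact hcomb.congr (fun z => (hsplitR z).symm)
  -- limit at the left endpoint L
  have htop : Filter.Tendsto (gFun ∅ S2 S3 S4 a d) (𝓝[>] L) Filter.atTop := by
    have hsplitL : ∀ z, gFun ∅ S2 S3 S4 a d z =
        (- ∑ i ∈ S2, a i * Real.log (d i - z) + ∑ i ∈ S3, a i * Real.log (d i - z)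
          - ∑ i ∈ S4.erase i₀, a i * Real.log (z + d i)) + (-(a i₀)) * Real.log (z + d i₀) := by
      intro z
      simp only [gFun, Finset.sum_empty]
      rw [← Finset.add_sum_erase S4 _ hi₀S4]
      ring
    have hdL : ∀ i : Fin s, 0 < d i - L := by
      intro i
      have := hd1le i
      rw [hLdef]
      linarith [hdi₀.1]
    have hcont1 : ContinuousAt (fun z => ∑ i ∈ S2, a i * Real.log (d i - z)) L :=
      (hasDerivAt_sum_log_sub S2 a d (fun i _ => hdL i)).continuousAt
    have hcont2 : ContinuousAt (fun z => ∑ i ∈ S3, a i * Real.log (d i - z)) L :=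
      (hasDerivAt_sum_log_sub S3 a d (fun i _ => hdL i)).continuousAt
    have hcont3 : ContinuousAt (fun z => ∑ i ∈ S4.erase i₀, a i * Real.log (z + d i)) L := by
      apply (hasDerivAt_sum_log_add (S4.erase i₀) a d (fun i hi => ?_)).continuousAt
      have hii₀ : i ≠ i₀ := Finset.ne_of_mem_erase hi
      have hle := hdinf i (Finset.mem_of_mem_erase hi)
      have hne : d i ≠ d i₀ := fun h => hii₀ (hinj h)
      rw [hLdef]
      rcases lt_or_eq_of_le hle with h | h
      · linarith
      · exact absurd h.symm hne
    have hC : ContinuousAt (fun z => - ∑ i ∈ S2, a i * Real.log (d i - z)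
        + ∑ i ∈ S3, a i * Real.log (d i - z)
        - ∑ i ∈ S4.erase i₀, a i * Real.log (z + d i)) L := (hcont1.neg.add hcont2).sub hcont3
    have hT1 : Filter.Tendsto (fun z : ℝ => z + d i₀) (𝓝[>] L) (𝓝[>] (0:ℝ)) := by
      apply tendsto_nhdsWithin_of_tendsto_nhds_of_eventually_within
      · have h0 : Filter.Tendsto (fun z : ℝ => z + d i₀) (𝓝 L) (𝓝 (0:ℝ)) := by
          have hc : Continuous (fun z : ℝ => z + d i₀) := by fun_prop
          have h1 := hc.tendsto L
          have hL0 : L + d i₀ = 0 := by rw [hLdef]; ring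
          rw [hL0] at h1
          exact h1
        exact h0.mono_left nhdsWithin_le_nhds
      · filter_upwards [self_mem_nhdsWithin] with z hz
        simp only [Set.mem_Ioi] at hz ⊢
        rw [hLdef] at hz
        linarith
    have hT2 : Filter.Tendsto (fun z : ℝ => Real.log (z + d i₀)) (𝓝[>] L) Filter.atBot :=
      Real.tendsto_log_nhdsGT_zero.comp hT1
    have hT3 : Filter.Tendsto (fun z : ℝ => (-(a i₀)) * Real.log (z + d i₀)) (𝓝[>] L)
        Filter.atTop := hT2.const_mul_atBot_of_neg (neg_lt_zero.2 (ha i₀))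
    have hcomb := (hC.tendsto.mono_left nhdsWithin_le_nhds).add_atTop hT3
    exact hcomb.congr (fun z => (hsplitL z).symm)
  obtain ⟨K, z₁, z₂, hz₁, hz₂, hne, hg1, hg2, hgd1, hgd2⟩ :=
    extraction hder hanal hz₀mem hderivpos htop hbot
  exact ⟨d, hinj, K, z₁, z₂, hne, hmemI z₁ hz₁, hmemI z₂ hz₂, hg1, hg2, hgd1, hgd2⟩


/-- Theorem 3.1(b)(2): if `S2`, `S3`, `S4` are non-empty and `S1 = ∅`, the multistability
criterion holds iff `∑_{i ∈ S2} a i > min_{i ∈ S3} a i`. -/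
theorem multistability_b2
    {s : ℕ} (hs : 0 < s)
    (S1 S2 S3 S4 : Finset (Fin s))
    (h12 : Disjoint S1 S2) (h13 : Disjoint S1 S3) (h14 : Disjoint S1 S4)
    (h23 : Disjoint S2 S3) (h24 : Disjoint S2 S4) (h34 : Disjoint S3 S4)
    (hcover : S1 ∪ S2 ∪ S3 ∪ S4 = Finset.univ)
    (a : Fin s → ℝ) (ha : ∀ i, 0 < a i)
    (hS1 : S1 = ∅) (hS2 : S2.Nonempty) (hS3 : S3.Nonempty) (hS4 : S4.Nonempty) :
    MultistabCriterion S1 S2 S3 S4 a ↔ S3.inf' hS3 a < ∑ i ∈ S2, a i := by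
  subst hS1
  constructor
  · intro hcrit
    by_contra hnot
    push_neg at hnot
    obtain ⟨d, hinj, K, z₁, z₂, hne, hm1, hm2, hg1, hg2, hd1, hd2⟩ := hcrit
    rcases hne.lt_or_gt with h | h
    · exact forward_aux S2 S3 S4 hS3 hS4 a ha hnot d h hm1 hm2 (hg1.trans hg2.symm) hd1 hd2
    · exact forward_aux S2 S3 S4 hS3 hS4 a ha hnot d h hm2 hm1 (hg2.trans hg1.symm) hd2 hd1
  · intro hlt
    exact reverse_dir S2 S3 S4 h23 h24 h34 a ha hS3 hS4 hlt
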